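/- arXiv:0802.2836 — 3 statements merged into one kernel-verified Lean document; each statement's English description precedes it below -/
import Mathlib

section
/- For every positive integer m divisible by 3 there exists a WGP instance with interference radius d_I = 1 and m packets such that: (i) every feasible schedule in which each packet is routed to the sink along a shortest path has maximum flow time at least 4m/3, while (ii) there exists a feasible schedule with maximum flow time at most 6. The instance: the graph consists of a node u, a node q, the sink s with path u–q–s, three nodes u_1, u_2, u_3 each adjacent to u, and for each i a private path of length 4 from u_i to s (through three internal nodes) disjoint from u and q; for each i ∈ {1,2,3} and each h = 0, …, m/3 − 1, one packet with origin u_i is released at time 5h. Hence no algorithm that routes packets along shortest paths can approximate the maximum flow time within a ratio better than Ω(m). -/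
/-- An instance of the Wireless Gathering Problem. -/
structure WGPInstance (V J : Type*) where
  /-- the communication graph -/
  G : SimpleGraph V
  /-- the sink -/
  s : V
  /-- the interference radius -/
  dI : ℕ
  /-- origins of the packets -/
  o : J → V
  /-- release dates of the packets -/
  r : J → ℕ

namespace WGPInstance

variable {V J : Type*}

/-- Two calls `(u,v)` and `(u',v')` occurring in the same round interfere if
`d(u',v) ≤ d_I` or `d(u,v') ≤ d_I`. -/
def Interferes (I : WGPInstance V J) (u v u' v' : V) : Prop :=
  I.G.edist u' v ≤ I.dI ∨ I.G.edist u v' ≤ I.dI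

/-- A feasible (unit-speed) schedule: `x j t` is the node holding packet `j` at round `t`.
Packets sit at their origin until their release date, move along edges of `G`
(the transition from `x j t` to `x j (t+1)` being a call of round `t`), calls of a round
are pairwise non-interfering and have distinct senders, and every packet reaches the sink. -/
def Feasible (I : WGPInstance V J) (x : J → ℕ → V) : Prop :=
  (∀ j t, t ≤ I.r j → x j t = I.o j) ∧
  (∀ j t, x j (t + 1) = x j t ∨ I.G.Adj (x j t) (x j (t + 1))) ∧
  (∀ j k t, j ≠ k → x j (t + 1) ≠ x j t → x k (t + 1) ≠ x k t →
    x j t ≠ x k t ∧ ¬ I.Interferes (x j t) (x j (t + 1)) (x k t) (x k (t + 1))) ∧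
  (∀ j, ∃ t, x j t = I.s)

/-- The completion time of packet `j`: the first round `t ≥ r_j` with `x j t = s`. -/
noncomputable def completion (I : WGPInstance V J) (x : J → ℕ → V) (j : J) : ℕ :=
  sInf {t | I.r j ≤ t ∧ x j t = I.s}

/-- The flow time of packet `j`: `F_j = C_j - r_j`. -/
noncomputable def flow (I : WGPInstance V J) (x : J → ℕ → V) (j : J) : ℕ :=
  I.completion x j - I.r j

/-- Packet `j` is available (active) at round `t` if it has been released and
has not yet reached the sink. -/
def Active (I : WGPInstance V J) (x : J → ℕ → V) (j : J) (t : ℕ) : Prop :=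
  I.r j ≤ t ∧ x j t ≠ I.s

/-- `x` is a schedule that a Priority Greedy algorithm with priority function `prio`
(lower `prio`-value = higher priority) may produce: packets that reached the sink stay
there; every call moves an active packet one step along a shortest path to the sink;
and an active packet is left in place only if every such shortest-path step would
interfere with the call of some higher-priority packet of that round. -/
def PriorityGreedy (I : WGPInstance V J) (prio : J → ℕ) (x : J → ℕ → V) : Prop :=
  Function.Injective prio ∧
  (∀ j t, x j t = I.s → x j (t + 1) = I.s) ∧
  (∀ j t, x j (t + 1) ≠ x j t →
    I.Active x j t ∧ I.G.dist (x j (t + 1)) I.s + 1 = I.G.dist (x j t) I.s) ∧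
  (∀ j t, I.Active x j t → x j (t + 1) = x j t →
    ∀ v, I.G.Adj (x j t) v → I.G.dist v I.s + 1 = I.G.dist (x j t) I.s →
      ∃ k, prio k < prio j ∧ x k (t + 1) ≠ x k t ∧
        I.Interferes (x j t) v (x k t) (x k (t + 1)))

/-- FIFO is the Priority Greedy algorithm in which packets with earlier release dates
have higher priority (ties broken arbitrarily). -/
def FIFO (I : WGPInstance V J) (x : J → ℕ → V) : Prop :=
  ∃ prio : J → ℕ, (∀ j k, I.r j < I.r k → prio j < prio k) ∧ I.PriorityGreedy prio x

end WGPInstance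

/-- The vertices of the lower-bound instance for shortest-path routing: a hub `u`, an
intermediate node `q`, the sink `s`, three sources `src i` (`i < 3`), and for each `i`
three internal nodes `inner i 0, inner i 1, inner i 2` of a private path from `src i`
to `s`. -/
inductive SPNode where
  | u : SPNode
  | q : SPNode
  | s : SPNode
  | src : Fin 3 → SPNode
  | inner : Fin 3 → Fin 3 → SPNode

/-- The graph of the lower-bound instance: the path `u – q – s`; each `src i` adjacent
to `u`; and for each `i` the private path `src i – inner i 0 – inner i 1 – inner i 2 – s`
of length 4, disjoint from `u` and `q`. -/
def spGraph : SimpleGraph SPNode :=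
  SimpleGraph.fromRel fun a b =>
    match a, b with
    | .u, .q => True
    | .q, .s => True
    | .src _, .u => True
    | .src i, .inner i' p => i = i' ∧ (p : ℕ) = 0
    | .inner i p, .inner i' p' => i = i' ∧ (p : ℕ) + 1 = (p' : ℕ)
    | .inner _ p, .s => (p : ℕ) = 2
    | _, _ => False

/-- The lower-bound WGP instance: interference radius `d_I = 1`; for each `i ∈ {0,1,2}`
and each `h = 0, …, m/3 − 1`, one packet with origin `src i` is released at time `5h`
(packet `j` has origin `src (j mod 3)` and release date `5·⌊j/3⌋`). -/
def spInstance (m : ℕ) : WGPInstance SPNode (Fin m) where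
  G := spGraph
  s := .s
  dI := 1
  o := fun j => .src ⟨(j : ℕ) % 3, Nat.mod_lt _ (by norm_num)⟩
  r := fun j => 5 * ((j : ℕ) / 3)

/-- A schedule routes every packet along a shortest path: every call moves a packet one
step closer to the sink (so the sequence of nodes visited by each packet is a shortest
path in `G` from its origin to `s`). -/
def WGPInstance.ShortestPathRouted {V J : Type*} (I : WGPInstance V J)
    (x : J → ℕ → V) : Prop :=
  ∀ j t, x j (t + 1) ≠ x j t →
    I.G.dist (x j (t + 1)) I.s + 1 = I.G.dist (x j t) I.s

/-! Every shortest route from a source `src i` runs through `u` and `q`, and any two of the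
calls `src i → u`, `u → q`, `q → s` interfere at radius 1. So a shortest-path schedule
makes at most one of the `3m` calls it needs per round, the last packet arrives no earlier
than round `3m`, and it was released at most `5(m - 1)/3` rounds after round 0. Without
the shortest-path restriction, the packets from `src 1` and `src 2` take their private paths
(after waiting one and two rounds), which keeps the three packets of a batch and
consecutive batches out of each other's way. -/

namespace SimpleGraph

variable {V : Type*} {G : SimpleGraph V} {φ : V → ℕ}

lemma le_length_add_of_lipschitz (hφ : ∀ a b, G.Adj a b → φ a ≤ φ b + 1) {a b : V}
    (w : G.Walk a b) : φ a ≤ w.length + φ b := by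
  induction w with
  | nil => simp
  | cons h _ ih =>
    rw [Walk.length_cons]
    have := hφ _ _ h
    omega

lemma exists_walk_length_eq_of_descent {s : V} (hs : φ s = 0)
    (hdesc : ∀ a, a ≠ s → ∃ b, G.Adj a b ∧ φ b + 1 = φ a) (a : V) :
    ∃ w : G.Walk a s, w.length = φ a := by
  induction hn : φ a generalizing a with
  | zero =>
    by_cases ha : a = s
    · subst ha
      exact ⟨.nil, rfl⟩
    · obtain ⟨b, -, hb⟩ := hdesc a ha
      omega
  | succ n ih =>
    obtain ⟨b, hab, hb⟩ := hdesc a (by rintro rfl; omega)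
    obtain ⟨w, hw⟩ := ih b (by omega)
    exact ⟨.cons hab w, by rw [Walk.length_cons, hw]⟩

lemma dist_eq_of_lipschitz_of_descent {s : V} (hs : φ s = 0)
    (hφ : ∀ a b, G.Adj a b → φ a ≤ φ b + 1)
    (hdesc : ∀ a, a ≠ s → ∃ b, G.Adj a b ∧ φ b + 1 = φ a) (a : V) : G.dist a s = φ a := by
  obtain ⟨w, hw⟩ := exists_walk_length_eq_of_descent hs hdesc a
  refine le_antisymm (hw ▸ dist_le w) ?_
  obtain ⟨w', hw'⟩ := w.reachable.exists_walk_length_eq_dist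
  have := le_length_add_of_lipschitz hφ w'
  omega

end SimpleGraph

open Finset

namespace WGPInstance

variable {V J : Type*} {I : WGPInstance V J} {x : J → ℕ → V}

open Classical in
noncomputable def sendRounds (x : J → ℕ → V) (j : J) (T : ℕ) : Finset ℕ :=
  {t ∈ range T | x j (t + 1) ≠ x j t}

open Classical in
lemma sendRounds_succ (j : J) (T : ℕ) :
    sendRounds x j (T + 1) =
      if x j (T + 1) ≠ x j T then insert T (sendRounds x j T) else sendRounds x j T := by
  rw [sendRounds, range_add_one, filter_insert]
  rfl

lemma Feasible.completion_spec (hx : I.Feasible x) (j : J) :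
    I.r j ≤ I.completion x j ∧ x j (I.completion x j) = I.s := by
  obtain ⟨t, ht⟩ := hx.2.2.2 j
  refine Nat.sInf_mem (s := {t | I.r j ≤ t ∧ x j t = I.s}) ⟨max t (I.r j), le_max_right _ _, ?_⟩
  rcases le_total t (I.r j) with h | h
  · rw [max_eq_right h, hx.1 j _ le_rfl, ← hx.1 j t h, ht]
  · rwa [max_eq_left h]

lemma flow_le_of_eq_sink {j : J} {t : ℕ} (ht : I.r j ≤ t) (hs : x j t = I.s) :
    I.flow x j ≤ t - I.r j :=
  Nat.sub_le_sub_right (Nat.sInf_le (show t ∈ {t | I.r j ≤ t ∧ x j t = I.s} from ⟨ht, hs⟩)) _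

lemma ShortestPathRouted.eq_sink_of_le (hx : I.ShortestPathRouted x) {j : J} {t t' : ℕ}
    (hs : x j t = I.s) (htt' : t ≤ t') : x j t' = I.s := by
  induction t', htt' using Nat.le_induction with
  | base => exact hs
  | succ t' _ ih =>
    by_contra hne
    have := hx j t' (ih ▸ hne)
    rw [ih, SimpleGraph.dist_self] at this
    omega

lemma ShortestPathRouted.dist_eq_add_card_sendRounds (hx : I.ShortestPathRouted x)
    (j : J) (T : ℕ) :
    I.G.dist (x j 0) I.s = I.G.dist (x j T) I.s + #(sendRounds x j T) := by
  induction T with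
  | zero => simp [sendRounds]
  | succ T ih =>
    rw [sendRounds_succ]
    by_cases hmove : x j (T + 1) ≠ x j T
    · rw [if_pos hmove, card_insert_of_notMem (by simp [sendRounds]), ih,
        ← hx j T hmove]
      ring
    · rw [if_neg hmove, ih, not_not.mp hmove]

lemma Feasible.sum_card_sendRounds_le [Fintype J] (hx : I.Feasible x)
    (hclash : ∀ j k t, x j (t + 1) ≠ x j t → x k (t + 1) ≠ x k t →
      x j t = x k t ∨ I.Interferes (x j t) (x j (t + 1)) (x k t) (x k (t + 1)))
    (T : ℕ) : ∑ j, #(sendRounds x j T) ≤ T := by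
  classical
  have hdisj : (Set.univ : Set J).PairwiseDisjoint (sendRounds x · T) := by
    intro j _ k _ hjk
    refine disjoint_left.mpr fun t htj htk => ?_
    have hj := (mem_filter.mp htj).2
    have hk := (mem_filter.mp htk).2
    obtain ⟨hsend, hint⟩ := hx.2.2.1 j k t hjk hj hk
    exact (hclash j k t hj hk).elim hsend hint
  calc ∑ j, #(sendRounds x j T)
      = #(univ.biUnion (sendRounds x · T)) := by
        rw [card_biUnion (by simpa using hdisj)]
    _ ≤ #(range T) :=
        card_le_card (biUnion_subset.mpr fun _ _ => filter_subset _ _)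
    _ = T := card_range T

end WGPInstance

deriving instance DecidableEq, Fintype for SPNode

instance : DecidableRel spGraph.Adj := fun a b => by
  rw [spGraph, SimpleGraph.fromRel_adj]
  cases a <;> cases b <;> dsimp only <;> infer_instance

def sinkDist : SPNode → ℕ
  | .u => 2
  | .q => 1
  | .s => 0
  | .src _ => 3
  | .inner _ p => 3 - p

lemma spGraph_dist_sink (a : SPNode) : spGraph.dist a .s = sinkDist a :=
  SimpleGraph.dist_eq_of_lipschitz_of_descent (φ := sinkDist) rfl (by decide) (by decide) a

/-- The nodes off the private paths, which shortest routes from the sources never enter. -/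
def SPNode.OnSpine : SPNode → Prop
  | .inner _ _ => False
  | _ => True

instance : DecidablePred SPNode.OnSpine := fun a => by
  cases a <;> dsimp only [SPNode.OnSpine] <;> infer_instance

lemma spInstance_interferes_iff (m : ℕ) (a b a' b' : SPNode) :
    (spInstance m).Interferes a b a' b' ↔
      (spGraph.Adj a' b ∨ a' = b) ∨ (spGraph.Adj a b' ∨ a = b') :=
  or_congr SimpleGraph.edist_le_one_iff_adj_or_eq SimpleGraph.edist_le_one_iff_adj_or_eq

lemma onSpine_of_shortest_step : ∀ a b : SPNode, a.OnSpine → spGraph.Adj a b →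
    sinkDist b + 1 = sinkDist a → b.OnSpine := by
  decide

set_option synthInstance.maxSize 1024 in
lemma spine_shortest_calls_interfere :
    ∀ a : SPNode, a.OnSpine → ∀ b, spGraph.Adj a b → sinkDist b + 1 = sinkDist a →
    ∀ a' : SPNode, a'.OnSpine → a ≠ a' → ∀ b', spGraph.Adj a' b' → sinkDist b' + 1 = sinkDist a' →
    (spGraph.Adj a' b ∨ a' = b) ∨ (spGraph.Adj a b' ∨ a = b') := by
  decide

section ShortestPathRouted

open WGPInstance

variable {m : ℕ} {x : Fin m → ℕ → SPNode}

lemma sinkDist_succ_of_shortestPathRouted (hS : (spInstance m).ShortestPathRouted x)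
    {j : Fin m} {t : ℕ} (h : x j (t + 1) ≠ x j t) :
    sinkDist (x j (t + 1)) + 1 = sinkDist (x j t) := by
  have := hS j t h
  change spGraph.dist _ .s + 1 = spGraph.dist _ .s at this
  rwa [spGraph_dist_sink, spGraph_dist_sink] at this

lemma onSpine_of_shortestPathRouted (hF : (spInstance m).Feasible x)
    (hS : (spInstance m).ShortestPathRouted x) (j : Fin m) (t : ℕ) : (x j t).OnSpine := by
  induction t with
  | zero =>
    rw [hF.1 j 0 (Nat.zero_le _)]
    trivial
  | succ t ih =>
    by_cases h : x j (t + 1) = x j t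
    · rwa [h]
    · exact onSpine_of_shortest_step _ _ ih ((hF.2.1 j t).resolve_left h)
        (sinkDist_succ_of_shortestPathRouted hS h)

lemma calls_clash_of_shortestPathRouted (hF : (spInstance m).Feasible x)
    (hS : (spInstance m).ShortestPathRouted x) (j k : Fin m) (t : ℕ)
    (hj : x j (t + 1) ≠ x j t) (hk : x k (t + 1) ≠ x k t) :
    x j t = x k t ∨ (spInstance m).Interferes (x j t) (x j (t + 1)) (x k t) (x k (t + 1)) := by
  rw [or_iff_not_imp_left, spInstance_interferes_iff]
  intro hsenders
  exact spine_shortest_calls_interfere _ (onSpine_of_shortestPathRouted hF hS j t) _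
    ((hF.2.1 j t).resolve_left hj) (sinkDist_succ_of_shortestPathRouted hS hj) _
    (onSpine_of_shortestPathRouted hF hS k t) hsenders _ ((hF.2.1 k t).resolve_left hk)
    (sinkDist_succ_of_shortestPathRouted hS hk)

lemma card_sendRounds_of_shortestPathRouted (hF : (spInstance m).Feasible x)
    (hS : (spInstance m).ShortestPathRouted x) {j : Fin m} {T : ℕ} (hT : x j T = .s) :
    #(sendRounds x j T) = 3 := by
  have := hS.dist_eq_add_card_sendRounds j T
  change spGraph.dist _ .s = spGraph.dist _ .s + _ at this
  rw [hF.1 j 0 (Nat.zero_le _), hT, spGraph_dist_sink, spGraph_dist_sink] at this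
  change 3 = 0 + _ at this
  omega

theorem spInstance_maxFlow_ge_of_shortestPathRouted (hF : (spInstance m).Feasible x)
    (hS : (spInstance m).ShortestPathRouted x) :
    4 * m ≤ 3 * univ.sup ((spInstance m).flow x) := by
  rcases Nat.eq_zero_or_pos m with rfl | hm
  · simp
  obtain ⟨j₀, -, hj₀⟩ := exists_mem_eq_sup univ (univ_nonempty_iff.mpr ⟨⟨0, hm⟩⟩)
    ((spInstance m).completion x)
  set T := (spInstance m).completion x j₀
  have hT : ∀ j, x j T = .s := fun j =>
    hS.eq_sink_of_le (hF.completion_spec j).2 (hj₀ ▸ le_sup (mem_univ j))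
  have hcalls : 3 * m ≤ T := calc
    3 * m = ∑ j, #(sendRounds x j T) := by
      simp [card_sendRounds_of_shortestPathRouted hF hS (hT _), mul_comm]
    _ ≤ T := hF.sum_card_sendRounds_le (calls_clash_of_shortestPathRouted hF hS) T
  have hflow : T - (spInstance m).r j₀ ≤ univ.sup ((spInstance m).flow x) :=
    le_sup (f := (spInstance m).flow x) (mem_univ j₀)
  have hrelease : 3 * (spInstance m).r j₀ ≤ 5 * (m - 1) := by
    change 3 * (5 * ((j₀ : ℕ) / 3)) ≤ _
    have := Nat.mul_div_le (j₀ : ℕ) 3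
    omega
  omega

end ShortestPathRouted

section PrivatePaths

open WGPInstance

def batchRoute : Fin 3 → List SPNode
  | 0 => [.src 0, .u, .q]
  | 1 => [.src 1, .src 1, .inner 1 0, .inner 1 1, .inner 1 2]
  | 2 => [.src 2, .src 2, .src 2, .inner 2 0, .inner 2 1, .inner 2 2]

/-- The node holding the packet from `src i` `d` rounds after its release; past the end of
its route it has reached the sink. -/
def batchPos (i : Fin 3) (d : ℕ) : SPNode := (batchRoute i).getD d .s

lemma batchPos_zero : ∀ i, batchPos i 0 = .src i := by decide

lemma batchPos_of_six_le (i : Fin 3) {d : ℕ} (hd : 6 ≤ d) : batchPos i d = .s :=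
  List.getD_eq_default _ _ (by fin_cases i <;> simp [batchRoute] <;> omega)

lemma lt_six_of_batchPos_succ_ne {i : Fin 3} {d : ℕ} (h : batchPos i (d + 1) ≠ batchPos i d) :
    d < 6 := by
  by_contra! hd
  rw [batchPos_of_six_le i hd, batchPos_of_six_le i (by omega)] at h
  exact h rfl

lemma batchPos_succ (i : Fin 3) (d : ℕ) :
    batchPos i (d + 1) = batchPos i d ∨ spGraph.Adj (batchPos i d) (batchPos i (d + 1)) := by
  by_cases hd : d < 6
  · revert i d
    decide
  · exact .inl (by rw [batchPos_of_six_le i (by omega), batchPos_of_six_le i (by omega)])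

set_option synthInstance.maxSize 1024 in
/-- Release dates are multiples of 5, so two packets sending in the same round belong to one
batch (`d = d'`) or to consecutive ones (`{d, d'} = {0, 5}`). -/
lemma batchPos_calls_compatible : ∀ i i' : Fin 3, ∀ d < 6, ∀ d' < 6,
    (i, d) ≠ (i', d') → d % 5 = d' % 5 →
    batchPos i (d + 1) ≠ batchPos i d → batchPos i' (d' + 1) ≠ batchPos i' d' →
    batchPos i d ≠ batchPos i' d' ∧
      ¬((spGraph.Adj (batchPos i' d') (batchPos i (d + 1)) ∨
          batchPos i' d' = batchPos i (d + 1)) ∨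
        (spGraph.Adj (batchPos i d) (batchPos i' (d' + 1)) ∨
          batchPos i d = batchPos i' (d' + 1))) := by
  decide

variable {m : ℕ}

def batchIndex (j : Fin m) : Fin 3 := ⟨j % 3, Nat.mod_lt _ (by norm_num)⟩

def privatePathSchedule (m : ℕ) (j : Fin m) (t : ℕ) : SPNode :=
  batchPos (batchIndex j) (t - (spInstance m).r j)

lemma privatePathSchedule_succ {j : Fin m} {t : ℕ} (ht : (spInstance m).r j ≤ t) :
    privatePathSchedule m j (t + 1) = batchPos (batchIndex j) (t - (spInstance m).r j + 1) := by
  rw [privatePathSchedule, Nat.sub_add_comm ht]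

lemma release_le_of_privatePathSchedule_succ_ne {j : Fin m} {t : ℕ}
    (h : privatePathSchedule m j (t + 1) ≠ privatePathSchedule m j t) :
    (spInstance m).r j ≤ t := by
  by_contra! ht
  simp only [privatePathSchedule, Nat.sub_eq_zero_of_le ht, Nat.sub_eq_zero_of_le ht.le] at h
  exact h rfl

lemma privatePathSchedule_release_add_six (j : Fin m) :
    privatePathSchedule m j ((spInstance m).r j + 6) = .s := by
  rw [privatePathSchedule, Nat.add_sub_cancel_left]
  exact batchPos_of_six_le _ le_rfl

lemma privatePathSchedule_feasible (m : ℕ) :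
    (spInstance m).Feasible (privatePathSchedule m) := by
  refine ⟨fun j t ht => ?_, fun j t => ?_, fun j k t hjk hj hk => ?_, fun j => ?_⟩
  · rw [privatePathSchedule, Nat.sub_eq_zero_of_le ht, batchPos_zero]
    rfl
  · rcases le_or_gt ((spInstance m).r j) t with ht | ht
    · rw [privatePathSchedule_succ ht]
      exact batchPos_succ _ _
    · refine .inl ?_
      simp only [privatePathSchedule, Nat.sub_eq_zero_of_le ht, Nat.sub_eq_zero_of_le ht.le]
  · have hrj := release_le_of_privatePathSchedule_succ_ne hj
    have hrk := release_le_of_privatePathSchedule_succ_ne hk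
    rw [privatePathSchedule_succ hrj] at hj ⊢
    rw [privatePathSchedule_succ hrk] at hk ⊢
    rw [spInstance_interferes_iff]
    change 5 * ((j : ℕ) / 3) ≤ t at hrj
    change 5 * ((k : ℕ) / 3) ≤ t at hrk
    refine batchPos_calls_compatible _ _ _ (lt_six_of_batchPos_succ_ne hj) _
      (lt_six_of_batchPos_succ_ne hk) (fun h => hjk ?_) ?_ hj hk
    · simp only [Prod.mk.injEq, batchIndex, Fin.mk.injEq] at h
      change _ ∧ t - 5 * ((j : ℕ) / 3) = t - 5 * ((k : ℕ) / 3) at h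
      ext
      omega
    · change (t - 5 * ((j : ℕ) / 3)) % 5 = (t - 5 * ((k : ℕ) / 3)) % 5
      omega
  · exact ⟨_, privatePathSchedule_release_add_six j⟩

lemma flow_privatePathSchedule_le (j : Fin m) :
    (spInstance m).flow (privatePathSchedule m) j ≤ 6 := by
  simpa using flow_le_of_eq_sink (Nat.le_add_right _ _) (privatePathSchedule_release_add_six j)

end PrivatePaths

open WGPInstance in
theorem shortestPath_routing_lower_bound_general (m : ℕ) :
    (∀ x : Fin m → ℕ → SPNode,
      (spInstance m).Feasible x → (spInstance m).ShortestPathRouted x →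
      4 * m ≤ 3 * Finset.univ.sup ((spInstance m).flow x)) ∧
    (∃ x : Fin m → ℕ → SPNode,
      (spInstance m).Feasible x ∧ ∀ j, (spInstance m).flow x j ≤ 6) :=
  ⟨fun _ hF hS => spInstance_maxFlow_ge_of_shortestPathRouted hF hS,
    ⟨privatePathSchedule m, privatePathSchedule_feasible m, flow_privatePathSchedule_le⟩⟩

open WGPInstance in
/-- For every positive `m` divisible by 3, in the instance `spInstance m` (with
interference radius 1): (i) every feasible schedule routing all packets along shortest
paths has maximum flow time at least `4m/3`, while (ii) there is a feasible schedule
with maximum flow time at most `6`.  Hence no algorithm routing packets along shortest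
paths approximates the maximum flow time within a ratio better than `Ω(m)`. -/
theorem shortestPath_routing_lower_bound (m : ℕ) (hm : 0 < m) (h3 : 3 ∣ m) :
    (∀ x : Fin m → ℕ → SPNode,
      (spInstance m).Feasible x → (spInstance m).ShortestPathRouted x →
      4 * m ≤ 3 * Finset.univ.sup ((spInstance m).flow x)) ∧
    (∃ x : Fin m → ℕ → SPNode,
      (spInstance m).Feasible x ∧ ∀ j, (spInstance m).flow x j ≤ 6) :=
  shortestPath_routing_lower_bound_general m
end

section
/- FIFO is a 5-approximation algorithm for the minimization of the maximum completion time in the Wireless Gathering Problem, for every interference radius d_I ≥ 1; moreover, when d_I = 1, FIFO is a 4-approximation: the FIFO schedule satisfies max_j C_j ≤ 5 · max_j C*_j in general and max_j C_j ≤ 4 · max_j C*_j when d_I = 1, where C*_j are the completion times in any feasible schedule. -/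
theorem exists_lt_eq_add_one_and_succ_eq {f : ℕ → ℕ} (hf : ∀ t, f t ≤ f (t + 1) + 1)
    {ℓ T : ℕ} (h0 : ℓ < f 0) (hT : f T ≤ ℓ) :
    ∃ t < T, f t = ℓ + 1 ∧ f (t + 1) = ℓ := by
  induction T with
  | zero => omega
  | succ T ih =>
    by_cases hT' : f T ≤ ℓ
    · obtain ⟨t, ht, hft⟩ := ih hT'
      exact ⟨t, by omega, hft⟩
    · have := hf T
      exact ⟨T, by omega, by omega, by omega⟩

theorem Finset.sum_filter_le_add_le_sum_filter {ι M : Type*} [Fintype ι] [DecidableEq ι]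
    [AddCommMonoid M] [PartialOrder M] [CanonicallyOrderedAdd M] (g : ι → ℕ) (f : ι → M)
    {k p : ι} (h : g k < g p) :
    ∑ i ∈ univ.filter (fun i => g i ≤ g k), f i + f p ≤
      ∑ i ∈ univ.filter (fun i => g i ≤ g p), f i := by
  rw [add_comm, ← sum_insert (by simp; omega)]
  refine sum_le_sum_of_subset fun i => ?_
  simp only [mem_insert, mem_filter, mem_univ, true_and]
  rintro (rfl | hi) <;> omega

namespace SimpleGraph

variable {V : Type*} {G : SimpleGraph V} {u v w : V}

theorem Adj.dist_le_dist_add_one (h : G.Adj u v) (w : V) : G.dist u w ≤ G.dist v w + 1 := by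
  have := h.reachable.dist_triangle_left w
  rw [dist_eq_one_iff_adj.mpr h] at this
  omega

theorem dist_le_add_dist_of_edist_le {d : ℕ} (h : G.edist u v ≤ d) (w : V) :
    G.dist u w ≤ d + G.dist v w := by
  have huv : G.Reachable u v := reachable_of_edist_ne_top (ne_top_of_le_ne_top (by simp) h)
  have hd : G.dist u v ≤ d := by
    rw [← ENat.natCast_le_natCast, huv.coe_dist_eq_edist]
    exact h
  have := huv.dist_triangle_left w
  omega

theorem edist_le_dist_add_dist (hu : G.Reachable u w) (hv : G.Reachable v w) :
    G.edist u v ≤ G.dist u w + G.dist v w := by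
  rw [hu.coe_dist_eq_edist, hv.coe_dist_eq_edist, edist_comm (u := v)]
  exact G.edist_triangle

theorem Reachable.exists_adj_dist_add_one (h : G.Reachable u w) (hne : u ≠ w) :
    ∃ v, G.Adj u v ∧ G.dist v w + 1 = G.dist u w := by
  obtain ⟨p, hp⟩ := h.exists_walk_length_eq_dist
  cases p with
  | nil => exact absurd rfl hne
  | cons hadj q =>
    refine ⟨_, hadj, le_antisymm ?_ (hadj.dist_le_dist_add_one w)⟩
    rw [← hp, Walk.length_cons]
    exact Nat.succ_le_succ (dist_le q)

end SimpleGraph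

namespace WGPInstance

open SimpleGraph Finset

variable {V J : Type*} {I : WGPInstance V J} {x y : J → ℕ → V} {p q : J} {t : ℕ}

theorem completion_le (h1 : I.r p ≤ t) (h2 : y p t = I.s) : I.completion y p ≤ t :=
  Nat.sInf_le ⟨h1, h2⟩

namespace Feasible

theorem reachable_zero (hy : I.Feasible y) (p : J) (t : ℕ) :
    I.G.Reachable (y p 0) (y p t) := by
  induction t with
  | zero => rfl
  | succ t ih =>
    rcases hy.2.1 p t with h | h
    · rwa [h]
    · exact ih.trans h.reachable

theorem reachable_sink (hy : I.Feasible y) (p : J) (t : ℕ) : I.G.Reachable (y p t) I.s := by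
  obtain ⟨T, hT⟩ := hy.2.2.2 p
  exact hT ▸ (hy.reachable_zero p t).symm.trans (hy.reachable_zero p T)

theorem dist_le_dist_succ_add_one (hy : I.Feasible y) (p : J) (t : ℕ) :
    I.G.dist (y p t) I.s ≤ I.G.dist (y p (t + 1)) I.s + 1 := by
  rcases hy.2.1 p t with h | h
  · rw [h]
    omega
  · exact h.dist_le_dist_add_one _

theorem dist_le_dist_add (hy : I.Feasible y) (p : J) (a k : ℕ) :
    I.G.dist (y p a) I.s ≤ I.G.dist (y p (a + k)) I.s + k := by
  induction k with
  | zero => simp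
  | succ k ih =>
    have := hy.dist_le_dist_succ_add_one p (a + k)
    show _ ≤ I.G.dist (y p (a + k + 1)) I.s + (k + 1)
    omega

theorem completion_spec_s9 (hy : I.Feasible y) (p : J) :
    I.r p ≤ I.completion y p ∧ y p (I.completion y p) = I.s := by
  apply Nat.sInf_mem (s := {t | I.r p ≤ t ∧ y p t = I.s})
  obtain ⟨T, hT⟩ := hy.2.2.2 p
  rcases le_or_gt (I.r p) T with h | h
  · exact ⟨T, h, hT⟩
  · exact ⟨I.r p, le_rfl, by rw [hy.1 p _ le_rfl, ← hy.1 p T h.le, hT]⟩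

theorem add_dist_le_completion (hy : I.Feasible y) (ht : t ≤ I.completion y p) :
    t + I.G.dist (y p t) I.s ≤ I.completion y p := by
  have := hy.dist_le_dist_add p t (I.completion y p - t)
  rw [Nat.add_sub_cancel' ht, (hy.completion_spec_s9 p).2, dist_self] at this
  omega

theorem release_add_dist_le_completion (hy : I.Feasible y) (p : J) :
    I.r p + I.G.dist (I.o p) I.s ≤ I.completion y p := by
  simpa only [hy.1 p _ le_rfl] using hy.add_dist_le_completion (hy.completion_spec_s9 p).1

theorem dI_lt_dist_add_dist (hy : I.Feasible y) (hpq : p ≠ q) (hp : y p (t + 1) ≠ y p t)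
    (hq : y q (t + 1) ≠ y q t) :
    I.dI < I.G.dist (y p t) I.s + I.G.dist (y q (t + 1)) I.s := by
  by_contra! h
  refine (hy.2.2.1 p q t hpq hp hq).2 (Or.inr ?_)
  exact (edist_le_dist_add_dist (hy.reachable_sink p t) (hy.reachable_sink q (t + 1))).trans
    (by exact_mod_cast h)

end Feasible

noncomputable def weight (I : WGPInstance V J) (p : J) : ℕ :=
  min (I.G.dist (I.o p) I.s) ((I.dI + 1) / 2)

theorem min_le_mul_weight {c a : ℕ} (hc : I.dI + 2 ≤ c * ((I.dI + 1) / 2))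
    (hao : a ≤ I.G.dist (I.o p) I.s) : min (I.dI + 2) a ≤ c * I.weight p := by
  rcases le_total (I.G.dist (I.o p) I.s) ((I.dI + 1) / 2) with h | h
  · have hc1 : 0 < c := Nat.pos_of_ne_zero (by rintro rfl; simp at hc)
    rw [weight, min_eq_left h]
    exact (min_le_right _ _).trans (hao.trans (Nat.le_mul_of_pos_left _ hc1))
  · rw [weight, min_eq_right h]
    exact (min_le_left _ _).trans hc

theorem Feasible.sum_weight_le_sup_completion [Fintype J] (hy : I.Feasible y) :
    ∑ p, I.weight p ≤ univ.sup (I.completion y) := by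
  have hcross : ∀ p ℓ, ℓ < I.weight p → ∃ t < I.completion y p,
      I.G.dist (y p t) I.s = ℓ + 1 ∧ I.G.dist (y p (t + 1)) I.s = ℓ := by
    intro p ℓ hℓ
    apply exists_lt_eq_add_one_and_succ_eq (hy.dist_le_dist_succ_add_one p)
    · rw [hy.1 p 0 (Nat.zero_le _)]
      exact hℓ.trans_le (min_le_left _ _)
    · rw [(hy.completion_spec_s9 p).2, dist_self]
      exact Nat.zero_le _
  choose! τ hτC hτ hτ' using hcross
  set calls := univ.sigma fun p => range (I.weight p)
  have hcalls : ∀ {p ℓ}, ⟨p, ℓ⟩ ∈ calls ↔ ℓ < I.weight p := by simp [calls]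
  have hmaps : ∀ i ∈ calls, τ i.1 i.2 ∈ range (univ.sup (I.completion y)) := by
    rintro ⟨p, ℓ⟩ hi
    rw [hcalls] at hi
    rw [mem_range]
    exact (hτC p ℓ hi).trans_le (le_sup (f := I.completion y) (mem_univ p))
  have hinj : Set.InjOn (fun i : (_ : J) × ℕ => τ i.1 i.2) calls := by
    rintro ⟨p, ℓ⟩ hp ⟨q, ℓ'⟩ hq (h : τ p ℓ = τ q ℓ')
    rw [mem_coe, hcalls] at hp hq
    by_cases hpq : p = q
    · subst hpq
      have := hτ' p ℓ hp
      rw [h, hτ' p ℓ' hq] at this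
      rw [this]
    · have hmove : ∀ r m, m < I.weight r → y r (τ r m + 1) ≠ y r (τ r m) := fun r m hm =>
        ne_of_apply_ne (I.G.dist · I.s) (by rw [hτ r m hm, hτ' r m hm]; omega)
      have := hy.dI_lt_dist_add_dist hpq (hmove p ℓ hp) (h ▸ hmove q ℓ' hq)
      rw [hτ p ℓ hp, h, hτ' q ℓ' hq] at this
      have := hp.trans_le (min_le_right _ _)
      have := hq.trans_le (min_le_right _ _)
      omega
  calc ∑ p, I.weight p = calls.card := by simp [calls]
    _ ≤ (range (univ.sup (I.completion y))).card := card_le_card_of_injOn _ hmaps hinj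
    _ = univ.sup (I.completion y) := card_range _

namespace PriorityGreedy

variable {prio : J → ℕ}

theorem eq_sink_of_le (hpg : I.PriorityGreedy prio x) {a b : ℕ} (h : x p a = I.s)
    (hab : a ≤ b) : x p b = I.s :=
  Nat.le_induction h (fun n _ ih => hpg.2.1 p n ih) b hab

theorem lt_completion (hpg : I.PriorityGreedy prio x) (hx : I.Feasible x)
    (hact : I.Active x p t) : t < I.completion x p := by
  by_contra! h
  exact hact.2 (hpg.eq_sink_of_le (hx.completion_spec_s9 p).2 h)

theorem dist_antitone (hpg : I.PriorityGreedy prio x) (p : J) :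
    Antitone fun t => I.G.dist (x p t) I.s := by
  refine antitone_nat_of_succ_le fun t => ?_
  by_cases h : x p (t + 1) = x p t
  · rw [h]
  · have := (hpg.2.2.1 p t h).2
    omega

theorem completion_le_of_forall_move (hpg : I.PriorityGreedy prio x) (hx : I.Feasible x)
    {T : ℕ} (hT : I.r p ≤ T)
    (hmove : ∀ t, T ≤ t → I.Active x p t → x p (t + 1) ≠ x p t) :
    I.completion x p ≤ T + I.G.dist (x p T) I.s := by
  induction hn : I.G.dist (x p T) I.s generalizing T with
  | zero =>
    simpa using completion_le hT ((hx.reachable_sink p T).dist_eq_zero_iff.mp hn)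
  | succ n ih =>
    have hact : I.Active x p T := ⟨hT, fun h => by simp [h] at hn⟩
    have hstep := (hpg.2.2.1 p T (hmove T le_rfl hact)).2
    have := ih (T := T + 1) (by omega) (fun t ht => hmove t (by omega)) (by omega)
    omega

theorem exists_blocker (hpg : I.PriorityGreedy prio x) (hx : I.Feasible x)
    (hact : I.Active x p t) (hstall : x p (t + 1) = x p t) :
    ∃ k, prio k < prio p ∧ t + 1 + I.G.dist (x p t) I.s ≤
      I.completion x k + min (I.dI + 2) (I.G.dist (x p t) I.s) := by
  obtain ⟨v, hadj, hv⟩ := (hx.reachable_sink p t).exists_adj_dist_add_one hact.2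
  obtain ⟨k, hk, hmove, hint⟩ := hpg.2.2.2 p t hact hstall v hadj hv
  obtain ⟨hkact, hkstep⟩ := hpg.2.2.1 k t hmove
  have hCk := hx.add_dist_le_completion (hpg.lt_completion hx hkact).le
  have hkpos := (hx.reachable_sink k t).pos_dist_of_ne hkact.2
  have hnear : I.G.dist (x p t) I.s ≤ I.G.dist (x k t) I.s + I.dI + 1 := by
    rcases hint with h | h
    · have := dist_le_add_dist_of_edist_le (edist_comm ▸ h) I.s
      omega
    · have := dist_le_add_dist_of_edist_le h I.s
      omega
  exact ⟨k, hk, by omega⟩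

theorem completion_le_or_exists_blocker (hpg : I.PriorityGreedy prio x) (hx : I.Feasible x)
    (p : J) :
    I.completion x p ≤ I.r p + I.G.dist (I.o p) I.s ∨
      ∃ k, prio k < prio p ∧ ∃ a, a ≤ I.G.dist (I.o p) I.s ∧
        I.completion x p ≤ I.completion x k + min (I.dI + 2) a := by
  set stalls := {t | I.Active x p t ∧ x p (t + 1) = x p t}
  rcases stalls.eq_empty_or_nonempty with hnone | hsome
  · left
    have := hpg.completion_le_of_forall_move hx le_rfl fun t _ hact hstall =>
      hnone.subset ⟨hact, hstall⟩
    rwa [hx.1 p _ le_rfl] at this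
  · right
    have hbdd : BddAbove stalls :=
      ⟨I.completion x p, fun t ht => (hpg.lt_completion hx ht.1).le⟩
    obtain ⟨hact, hstall⟩ := Nat.sSup_mem hsome hbdd
    obtain ⟨k, hk, hblock⟩ := hpg.exists_blocker hx hact hstall
    have hfree := hpg.completion_le_of_forall_move hx (p := p) (T := sSup stalls + 1)
      (by have := hact.1; omega)
      fun t ht hact' hstall' => by have := le_csSup hbdd ⟨hact', hstall'⟩; omega
    refine ⟨k, hk, I.G.dist (x p (sSup stalls)) I.s, ?_, ?_⟩
    · simpa only [hx.1 p _ le_rfl] using hpg.dist_antitone p hact.1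
    · rw [hstall] at hfree
      omega

theorem completion_le_sup_add_sum [Fintype J] (hpg : I.PriorityGreedy prio x) (hx : I.Feasible x)
    (hy : I.Feasible y) {c : ℕ} (hc : I.dI + 2 ≤ c * ((I.dI + 1) / 2)) (p : J) :
    I.completion x p ≤ univ.sup (I.completion y) +
      c * ∑ k ∈ univ.filter (fun k => prio k ≤ prio p), I.weight k := by
  classical
  induction hn : prio p using Nat.strong_induction_on generalizing p with
  | _ n ih =>
  subst hn
  rcases hpg.completion_le_or_exists_blocker hx p with hfree | ⟨k, hk, a, hao, hCp⟩
  · calc I.completion x p ≤ I.completion y p := hfree.trans (hy.release_add_dist_le_completion p)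
      _ ≤ univ.sup (I.completion y) := le_sup (f := I.completion y) (mem_univ p)
      _ ≤ _ := Nat.le_add_right _ _
  · calc I.completion x p ≤ I.completion x k + min (I.dI + 2) a := hCp
      _ ≤ univ.sup (I.completion y) +
            c * ∑ i ∈ univ.filter (fun i => prio i ≤ prio k), I.weight i + c * I.weight p :=
        add_le_add (ih _ hk k rfl) (min_le_mul_weight hc hao)
      _ = univ.sup (I.completion y) +
            c * (∑ i ∈ univ.filter (fun i => prio i ≤ prio k), I.weight i + I.weight p) := by
        ring
      _ ≤ _ := by
        gcongr
        exact sum_filter_le_add_le_sum_filter prio I.weight hk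

theorem sup_completion_le [Fintype J] (hpg : I.PriorityGreedy prio x) (hx : I.Feasible x)
    (hy : I.Feasible y) {c : ℕ} (hc : I.dI + 2 ≤ c * ((I.dI + 1) / 2)) :
    univ.sup (I.completion x) ≤ (c + 1) * univ.sup (I.completion y) :=
  Finset.sup_le fun p _ => calc
    I.completion x p ≤ univ.sup (I.completion y) +
        c * ∑ k ∈ univ.filter (fun k => prio k ≤ prio p), I.weight k :=
      hpg.completion_le_sup_add_sum hx hy hc p
    _ ≤ univ.sup (I.completion y) + c * univ.sup (I.completion y) := by
      gcongr
      exact (sum_le_sum_of_subset (filter_subset _ _)).trans hy.sum_weight_le_sup_completion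
    _ = (c + 1) * univ.sup (I.completion y) := by ring

end PriorityGreedy

end WGPInstance

open WGPInstance in
/-- FIFO is a 5-approximation for the minimization of the maximum completion time in the
Wireless Gathering Problem for every interference radius `d_I ≥ 1`; moreover, when
`d_I = 1`, FIFO is a 4-approximation.  Here `x` is any schedule produced by FIFO and `y`
is any feasible schedule (with completion times `C*`). -/
theorem fifo_five_approx {V J : Type*} [Fintype J]
    (I : WGPInstance V J) (hdI : 1 ≤ I.dI)
    (x : J → ℕ → V) (hx : I.Feasible x) (hfifo : I.FIFO x)
    (y : J → ℕ → V) (hy : I.Feasible y) :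
    Finset.univ.sup (I.completion x) ≤ 5 * Finset.univ.sup (I.completion y) ∧
    (I.dI = 1 →
      Finset.univ.sup (I.completion x) ≤ 4 * Finset.univ.sup (I.completion y)) := by
  obtain ⟨prio, -, hpg⟩ := hfifo
  exact ⟨hpg.sup_completion_le hx hy (c := 4) (by omega),
    fun h => hpg.sup_completion_le hx hy (c := 3) (by omega)⟩
end

section
/- For every WGP instance with m packets, the schedule produced by FIFO satisfies max_j F_j ≤ (1 + (γ/γ₀)·m) · max_j F*_j, where F*_j are the flow times in any feasible schedule; in particular FIFO is an O(m)-approximation for F-WGP. -/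
/-
Under any Priority Greedy schedule, a packet that is active but does not move is
blocked by a packet that does move, so in every round of the window `[r_j, C_j)` some packet
moves. Packets only move along shortest paths to the sink, so packet `k` moves at most
`d(o_k, s)` times in total, and `d(o_k, s) ≤ F*_k` in any feasible schedule. Hence
`F_j ≤ ∑_k d(o_k, s) ≤ m · max_k F*_k`, which is at most the claimed bound since `γ ≥ γ₀ ≥ 1`.
-/

open Finset

theorem Nat.card_filter_range_lt_add_le_of_antitone {f : ℕ → ℕ} (hf : Antitone f) (n : ℕ) :
    #{t ∈ range n | f (t + 1) < f t} + f n ≤ f 0 := by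
  induction n with
  | zero => simp
  | succ n ih =>
    rw [range_add_one, filter_insert]
    split_ifs with hdrop
    · rw [card_insert_of_notMem (by simp)]
      omega
    · have := hf (Nat.le_add_right n 1)
      omega

namespace SimpleGraph

variable {V : Type*} {G : SimpleGraph V}

theorem exists_walk_length_le_of_adj_or_eq {z : ℕ → V}
    (hz : ∀ t, z (t + 1) = z t ∨ G.Adj (z t) (z (t + 1))) {a b : ℕ} (hab : a ≤ b) :
    ∃ p : G.Walk (z a) (z b), p.length + a ≤ b := by
  induction b, hab using Nat.le_induction with
  | base => exact ⟨.nil, by simp⟩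
  | succ b _ ih =>
    obtain ⟨p, hp⟩ := ih
    rcases hz b with hstay | hadj
    · exact ⟨p.copy rfl hstay.symm, by rw [Walk.length_copy]; omega⟩
    · exact ⟨p.concat hadj, by rw [Walk.length_concat]; omega⟩

theorem Reachable.exists_adj_dist_add_one_eq {u v : V} (hr : G.Reachable u v) (hne : u ≠ v) :
    ∃ w, G.Adj u w ∧ G.dist w v + 1 = G.dist u v := by
  obtain ⟨p, hp⟩ := hr.exists_walk_length_eq_dist
  cases p with
  | nil => exact absurd rfl hne
  | cons hadj q =>
    refine ⟨_, hadj, le_antisymm ?_ ?_⟩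
    · simpa [← hp] using dist_le q
    · simpa [dist_eq_one_iff_adj.mpr hadj, add_comm] using
        hadj.reachable.dist_triangle_left v

end SimpleGraph

namespace WGPInstance

variable {V J : Type*} {I : WGPInstance V J}

theorem Feasible.completion_mem {z : J → ℕ → V} (hz : I.Feasible z) (j : J) :
    I.r j ≤ I.completion z j ∧ z j (I.completion z j) = I.s := by
  refine Nat.sInf_mem (s := {t | I.r j ≤ t ∧ z j t = I.s}) ?_
  obtain ⟨t, ht⟩ := hz.2.2.2 j
  by_cases hrt : I.r j ≤ t
  · exact ⟨t, hrt, ht⟩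
  · refine ⟨I.r j, le_rfl, ?_⟩
    rwa [hz.1 j _ le_rfl, ← hz.1 j t (by omega)]

theorem Feasible.exists_walk_to_sink {z : J → ℕ → V} (hz : I.Feasible z) (j : J) {t : ℕ}
    (ht : t ≤ I.completion z j) :
    ∃ p : I.G.Walk (z j t) I.s, p.length + t ≤ I.completion z j := by
  rw [← (hz.completion_mem j).2]
  exact SimpleGraph.exists_walk_length_le_of_adj_or_eq (hz.2.1 j) ht

theorem Feasible.dist_origin_le_flow {z : J → ℕ → V} (hz : I.Feasible z) (j : J) :
    I.G.dist (I.o j) I.s ≤ I.flow z j := by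
  obtain ⟨p, hp⟩ := hz.exists_walk_to_sink j (hz.completion_mem j).1
  have hdist := SimpleGraph.dist_le p
  unfold flow
  rw [← hz.1 j _ le_rfl]
  omega

theorem active_of_lt_completion {z : J → ℕ → V} {j : J} {t : ℕ} (hrt : I.r j ≤ t)
    (htC : t < I.completion z j) : I.Active z j t :=
  ⟨hrt, fun hs => Nat.notMem_of_lt_sInf htC ⟨hrt, hs⟩⟩

variable {prio : J → ℕ} {x : J → ℕ → V}

theorem PriorityGreedy.exists_moves_of_active (hg : I.PriorityGreedy prio x) {j : J} {t : ℕ}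
    (hact : I.Active x j t) (hreach : I.G.Reachable (x j t) I.s) :
    ∃ k, x k (t + 1) ≠ x k t := by
  by_contra! hstill
  obtain ⟨w, hadj, hw⟩ := hreach.exists_adj_dist_add_one_eq hact.2
  obtain ⟨k, -, hk, -⟩ := hg.2.2.2 j t hact (hstill j) w hadj hw
  exact hk (hstill k)

theorem PriorityGreedy.dist_sink_antitone (hg : I.PriorityGreedy prio x) (k : J) :
    Antitone fun t => I.G.dist (x k t) I.s := by
  refine antitone_nat_of_succ_le fun t => ?_
  by_cases hmove : x k (t + 1) = x k t
  · rw [hmove]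
  · have := (hg.2.2.1 k t hmove).2
    omega

theorem PriorityGreedy.card_moves_le [DecidableEq V] (hg : I.PriorityGreedy prio x) (hx : I.Feasible x)
    (k : J) (n : ℕ) :
    #{t ∈ range n | x k (t + 1) ≠ x k t} ≤ I.G.dist (I.o k) I.s := by
  have hdrops := Nat.card_filter_range_lt_add_le_of_antitone (hg.dist_sink_antitone k) n
  rw [← hx.1 k 0 (Nat.zero_le _)]
  refine le_trans (card_le_card fun t ht => ?_) (Nat.le_of_add_right_le hdrops)
  simp only [mem_filter] at ht ⊢
  have := (hg.2.2.1 k t ht.2).2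
  exact ⟨ht.1, by omega⟩

theorem PriorityGreedy.flow_le_sum_dist_origin [Fintype J] (hg : I.PriorityGreedy prio x)
    (hx : I.Feasible x) (j : J) :
    I.flow x j ≤ ∑ k, I.G.dist (I.o k) I.s := by
  classical
  set C := I.completion x j
  have hcover : Ico (I.r j) C ⊆ univ.biUnion fun k => {t ∈ range C | x k (t + 1) ≠ x k t} := by
    intro t ht
    rw [mem_Ico] at ht
    obtain ⟨p, -⟩ := hx.exists_walk_to_sink j ht.2.le
    obtain ⟨k, hk⟩ := hg.exists_moves_of_active (active_of_lt_completion ht.1 ht.2) p.reachable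
    simp only [mem_biUnion, mem_filter, mem_range]
    exact ⟨k, mem_univ k, ht.2, hk⟩
  calc I.flow x j = #(Ico (I.r j) C) := (Nat.card_Ico _ _).symm
    _ ≤ ∑ k, #{t ∈ range C | x k (t + 1) ≠ x k t} := (card_le_card hcover).trans card_biUnion_le
    _ ≤ ∑ k, I.G.dist (I.o k) I.s := sum_le_sum fun k _ => hg.card_moves_le hx k C

theorem PriorityGreedy.sup_flow_le [Fintype J] (hg : I.PriorityGreedy prio x) (hx : I.Feasible x)
    {y : J → ℕ → V} (hy : I.Feasible y) :
    univ.sup (I.flow x) ≤ Fintype.card J * univ.sup (I.flow y) := by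
  refine Finset.sup_le fun j _ => (hg.flow_le_sum_dist_origin hx j).trans ?_
  calc ∑ k, I.G.dist (I.o k) I.s ≤ ∑ _k : J, univ.sup (I.flow y) :=
        sum_le_sum fun k _ => (hy.dist_origin_le_flow k).trans (le_sup (mem_univ k))
    _ = Fintype.card J * univ.sup (I.flow y) := by simp

end WGPInstance

open WGPInstance in
/-- FIFO is an `O(m)`-approximation for F-WGP: for every WGP instance with `m` packets,
every schedule `x` produced by FIFO and every feasible schedule `y` (with flow times
`F*`), `max_j F_j ≤ (1 + (γ/γ₀)·m) · max_j F*_j`, where `γ = d_I + 2` and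
`γ₀ = ⌊(d_I+1)/2⌋`. -/
theorem fifo_flow_approx {V J : Type*} [Fintype J]
    (I : WGPInstance V J) (hdI : 1 ≤ I.dI)
    (x : J → ℕ → V) (hx : I.Feasible x) (hfifo : I.FIFO x)
    (y : J → ℕ → V) (hy : I.Feasible y) :
    ((Finset.univ.sup (I.flow x) : ℕ) : ℚ) ≤
      (1 + (I.dI + 2 : ℚ) / ((I.dI + 1) / 2 : ℕ) * (Fintype.card J : ℚ)) *
        ((Finset.univ.sup (I.flow y) : ℕ) : ℚ) := by
  obtain ⟨prio, -, hg⟩ := hfifo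
  have hratio : (1 : ℚ) ≤ (I.dI + 2 : ℚ) / ((I.dI + 1) / 2 : ℕ) := by
    have hpos : (1 : ℚ) ≤ ((I.dI + 1) / 2 : ℕ) := by exact_mod_cast (by omega)
    have hle : (((I.dI + 1) / 2 : ℕ) : ℚ) ≤ I.dI + 2 := by exact_mod_cast (by omega)
    exact (one_le_div (by linarith)).mpr hle
  have hsup : ((univ.sup (I.flow x) : ℕ) : ℚ) ≤ Fintype.card J * (univ.sup (I.flow y) : ℕ) := by
    exact_mod_cast hg.sup_flow_le hx hy
  refine hsup.trans (mul_le_mul_of_nonneg_right ?_ (Nat.cast_nonneg _))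
  nlinarith [(Nat.cast_nonneg (Fintype.card J) : (0 : ℚ) ≤ _)]
end
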